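/- Let K be a field, n a nonnegative integer, and a, c, p, q ∈ K with a ≠ 1, c ≠ 0, and with (q; q)_k ≠ 0 and (a p/c; p)_k ≠ 0 for 0 ≤ k ≤ n. Then Gosper's bibasic identity holds: Σ_{k=0}^{n} [ (1 − a p^k q^k)/(1 − a) ] · (a; p)_k (c; q)_k c^{−k} / ( (q; q)_k (a p/c; p)_k ) = (a p; p)_n (c q; q)_n c^{−n} / ( (q; q)_n (a p/c; p)_n ). -/

import Mathlib

open Finset

/-! The sum telescopes: with `T k = (a p;p)_k (c q;q)_k c^{-k} / ((q;q)_k (a p/c;p)_k)`, the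
`k = 0` summand is `T 0 = 1`, and for `k ≥ 1` the summand equals `T k - T (k - 1)`. After
cancelling the common factor `T (k - 1)` this reduces, with `x = a p^k` and `s = q^k`, to the
polynomial identity `(1 - x)(1 - c s) - (1 - s)(c - x) = (1 - c)(1 - x s)`. -/

def qPochhammer {K : Type*} [CommRing K] (a q : K) (n : ℕ) : K :=
  ∏ j ∈ range n, (1 - a * q ^ j)

namespace qPochhammer

variable {K : Type*} [CommRing K] (a q : K) (n : ℕ)

@[simp]
theorem zero : qPochhammer a q 0 = 1 := prod_range_zero _

theorem succ : qPochhammer a q (n + 1) = qPochhammer a q n * (1 - a * q ^ n) :=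
  prod_range_succ _ n

theorem succ' : qPochhammer a q (n + 1) = (1 - a) * qPochhammer (a * q) q n := by
  rw [qPochhammer, prod_range_succ', mul_comm]
  simp [qPochhammer, pow_succ', mul_assoc]

end qPochhammer

section Gosper

variable {K : Type*} [Field K] (a c p q : K)

def gosperSummand (k : ℕ) : K :=
  (1 - a * p ^ k * q ^ k) / (1 - a) *
    (qPochhammer a p k * qPochhammer c q k * (c ^ k)⁻¹) /
    (qPochhammer q q k * qPochhammer (a * p / c) p k)

def gosperPartialSum (n : ℕ) : K :=
  qPochhammer (a * p) p n * qPochhammer (c * q) q n * (c ^ n)⁻¹ /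
    (qPochhammer q q n * qPochhammer (a * p / c) p n)

theorem gosperSummand_zero (ha : a ≠ 1) : gosperSummand a c p q 0 = 1 := by
  simp [gosperSummand, div_self (sub_ne_zero.mpr ha.symm)]

theorem gosperPartialSum_zero : gosperPartialSum a c p q 0 = 1 := by
  simp [gosperPartialSum]

theorem gosperSummand_succ (ha : a ≠ 1) (hc : c ≠ 0) (k : ℕ)
    (hqq : qPochhammer q q (k + 1) ≠ 0) (hapc : qPochhammer (a * p / c) p (k + 1) ≠ 0) :
    gosperSummand a c p q (k + 1) =
      gosperPartialSum a c p q (k + 1) - gosperPartialSum a c p q k := by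
  rw [qPochhammer.succ] at hqq hapc
  obtain ⟨hQ, hQk⟩ := mul_ne_zero_iff.mp hqq
  obtain ⟨hD, hDk⟩ := mul_ne_zero_iff.mp hapc
  have ha' : 1 - a ≠ 0 := sub_ne_zero.mpr ha.symm
  have hDk' : c - a * p * p ^ k ≠ 0 := by
    contrapose! hDk
    field_simp
    linear_combination hDk
  have key : ∀ x s : K, (1 - x) * (1 - c * s) - (1 - s) * (c - x) = (1 - c) * (1 - x * s) :=
    fun x s => by ring
  rw [gosperSummand, gosperPartialSum, gosperPartialSum, qPochhammer.succ', qPochhammer.succ',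
    qPochhammer.succ, qPochhammer.succ, qPochhammer.succ, qPochhammer.succ]
  field_simp
  linear_combination -(qPochhammer (a * p) p k * qPochhammer (c * q) q k * c ^ (k + 1)) *
    key (a * p * p ^ k) (q * q ^ k)

end Gosper

/-- **Gosper's bibasic identity.**
Let `K` be a field, `n ≥ 0`, and `a, c, p, q ∈ K` with `a ≠ 1`, `c ≠ 0`, and
`(q;q)_k ≠ 0`, `(a p/c;p)_k ≠ 0` for `0 ≤ k ≤ n`.  Then
`∑_{k=0}^{n} ((1 - a p^k q^k)/(1 - a)) (a;p)_k (c;q)_k c^{-k} / ((q;q)_k (a p/c;p)_k)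
  = (a p;p)_n (c q;q)_n c^{-n} / ((q;q)_n (a p/c;p)_n)`. -/
theorem gosper_bibasic {K : Type*} [Field K] (n : ℕ) (a c p q : K)
    (ha : a ≠ 1) (hc : c ≠ 0)
    (hqq : ∀ k ≤ n, ∏ j ∈ range k, (1 - q * q ^ j) ≠ 0)
    (hapc : ∀ k ≤ n, ∏ j ∈ range k, (1 - a * p / c * p ^ j) ≠ 0) :
    ∑ k ∈ range (n + 1),
        (1 - a * p ^ k * q ^ k) / (1 - a) *
          ((∏ j ∈ range k, (1 - a * p ^ j)) * (∏ j ∈ range k, (1 - c * q ^ j)) * (c ^ k)⁻¹) /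
          ((∏ j ∈ range k, (1 - q * q ^ j)) * ∏ j ∈ range k, (1 - a * p / c * p ^ j))
      = (∏ j ∈ range n, (1 - a * p * p ^ j)) * (∏ j ∈ range n, (1 - c * q * q ^ j)) *
          (c ^ n)⁻¹ /
          ((∏ j ∈ range n, (1 - q * q ^ j)) * ∏ j ∈ range n, (1 - a * p / c * p ^ j)) := by
  change ∑ k ∈ range (n + 1), gosperSummand a c p q k = gosperPartialSum a c p q n
  rw [sum_range_succ', gosperSummand_zero a c p q ha,
    eq_sum_range_sub (gosperPartialSum a c p q) n, gosperPartialSum_zero, add_comm]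
  refine congrArg (1 + ·) (sum_congr rfl fun k hk => ?_)
  have hk : k + 1 ≤ n := mem_range.mp hk
  exact gosperSummand_succ a c p q ha hc k (hqq _ hk) (hapc _ hk)
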